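/- Let E be a real inner product space, let b ∈ E be a fixed vector, and for y ∈ E, y ≠ 0, set α(y) = ‖y‖, β(y) = ⟪b, y⟫ and s(y) = β(y)/α(y). Let Q : ℝ → ℝ be twice differentiable, and write Λ₁(y) for the derivative of α at y in direction b, Λ₂(y) for the second derivative of α at y at (b, b), Θ₁(y) for the derivative of y ↦ Q(s(y)) at y in direction b, and Θ₂(y) for its second derivative at (b, b). Then for every y ≠ 0: α(y)·Θ₂(y) + 2·Λ₁(y)·Θ₁(y) + Λ₂(y)·Q(s(y)) = ((‖b‖² - s(y)²)/‖y‖)·[ (‖b‖² - s(y)²)·Q''(s(y)) - s(y)·Q'(s(y)) + Q(s(y)) ]. -/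

import Mathlib

/-!
Differentiate along `b` only. Writing `w = (‖b‖² - s²)/α`, one has `∂_b α = s`, `∂_b s = w` and
`∂_b w = -3 s w / α`. Hence `Λ₁ = s`, `Λ₂ = w`, `Θ₁ = Q'(s) w` and
`Θ₂ = Q''(s) w² - 3 s Q'(s) w / α`, after which the identity is algebra.
-/

open scoped RealInnerProductSpace

section Calculus

variable {𝕜 E F : Type*} [NontriviallyNormedField 𝕜] [NormedAddCommGroup E] [NormedSpace 𝕜 E]
  [NormedAddCommGroup F] [NormedSpace 𝕜 F] {y : E}

theorem fderiv_fderiv_apply {f : E → F} (hf : DifferentiableAt 𝕜 (fderiv 𝕜 f) y) (u v : E) :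
    fderiv 𝕜 (fderiv 𝕜 f) y u v = fderiv 𝕜 (fun z => fderiv 𝕜 f z v) y u := by
  rw [fderiv_clm_apply hf (differentiableAt_const v)]
  simp

theorem fderiv_comp_apply_eq_deriv_mul {g : 𝕜 → 𝕜} {f : E → 𝕜} (hf : DifferentiableAt 𝕜 f y)
    (hg : DifferentiableAt 𝕜 g (f y)) (v : E) :
    fderiv 𝕜 (fun z => g (f z)) y v = deriv g (f y) * fderiv 𝕜 f y v := by
  have h := (hg.hasDerivAt.comp_hasFDerivAt y hf.hasFDerivAt).fderiv
  rw [Function.comp_def] at h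
  simp [h]

theorem fderiv_div_apply {f g : E → 𝕜} (hf : DifferentiableAt 𝕜 f y)
    (hg : DifferentiableAt 𝕜 g y) (hgy : g y ≠ 0) (v : E) :
    fderiv 𝕜 (fun z => f z / g z) y v
      = (fderiv 𝕜 f y v * g y - f y * fderiv 𝕜 g y v) / g y ^ 2 := by
  simp only [div_eq_mul_inv]
  have hginv : DifferentiableAt 𝕜 (fun z => (g z)⁻¹) y := hg.inv hgy
  rw [fderiv_fun_mul hf hginv]
  simp only [add_apply, smul_apply, smul_eq_mul, deriv_inv', neg_mul, mul_neg,
    fderiv_comp_apply_eq_deriv_mul (g := fun t => t⁻¹) hg (differentiableAt_inv hgy)]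
  field_simp
  ring

end Calculus

section InnerProductSpace

variable {E : Type*} [NormedAddCommGroup E] [InnerProductSpace ℝ E] {b y : E}

theorem fderiv_norm_apply_of_ne_zero (hy : y ≠ 0) (v : E) :
    fderiv ℝ (fun z : E => ‖z‖) y v = ⟪y, v⟫ / ‖y‖ := by
  have hnorm : DifferentiableAt ℝ (fun z : E => ‖z‖) y := differentiableAt_id.norm ℝ hy
  have hsq := congrArg (fun L => L v) (fderiv_norm_sq_apply (F := E) y)
  rw [fderiv_fun_pow 2 hnorm] at hsq
  simp only [nsmul_eq_mul, Nat.cast_ofNat, Nat.add_one_sub_one, pow_one, smul_apply, smul_eq_mul,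
    coe_innerSL_apply] at hsq
  field_simp
  linarith

theorem contDiffAt_inner_div_norm {n : WithTop ℕ∞} (hy : y ≠ 0) :
    ContDiffAt ℝ n (fun z : E => ⟪b, z⟫ / ‖z‖) y :=
  (contDiffAt_const.inner ℝ contDiffAt_id).div (contDiffAt_norm ℝ hy) (norm_ne_zero_iff.2 hy)

theorem differentiableAt_inner_div_norm (hy : y ≠ 0) :
    DifferentiableAt ℝ (fun z : E => ⟪b, z⟫ / ‖z‖) y :=
  (contDiffAt_inner_div_norm hy (n := 1)).differentiableAt one_ne_zero

theorem fderiv_inner_div_norm_apply_self (hy : y ≠ 0) :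
    fderiv ℝ (fun z : E => ⟪b, z⟫ / ‖z‖) y b = (‖b‖ ^ 2 - (⟪b, y⟫ / ‖y‖) ^ 2) / ‖y‖ := by
  have hy' : ‖y‖ ≠ 0 := norm_ne_zero_iff.2 hy
  rw [fderiv_div_apply (f := fun z => ⟪b, z⟫) (g := fun z => ‖z‖)
      (innerSL ℝ b).differentiableAt (differentiableAt_id.norm ℝ hy) hy',
    fderiv_norm_apply_of_ne_zero hy,
    show fderiv ℝ (fun z : E => ⟪b, z⟫) y = innerSL ℝ b from (innerSL ℝ b).fderiv]
  simp only [innerSL_apply_apply, real_inner_self_eq_norm_sq, real_inner_comm y b]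
  field_simp

theorem fderiv_fderiv_norm_apply_self (hy : y ≠ 0) :
    fderiv ℝ (fderiv ℝ (fun z : E => ‖z‖)) y b b = (‖b‖ ^ 2 - (⟪b, y⟫ / ‖y‖) ^ 2) / ‖y‖ := by
  have hdiff : DifferentiableAt ℝ (fderiv ℝ (fun z : E => ‖z‖)) y :=
    ((contDiffAt_norm ℝ hy (n := 2)).fderiv_right (m := 1) le_rfl).differentiableAt one_ne_zero
  have hgrad : (fun z => fderiv ℝ (fun z : E => ‖z‖) z b) =ᶠ[nhds y] fun z => ⟪b, z⟫ / ‖z‖ := by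
    filter_upwards [isOpen_ne.mem_nhds hy] with z hz
    rw [fderiv_norm_apply_of_ne_zero hz, real_inner_comm]
  rw [fderiv_fderiv_apply hdiff, hgrad.fderiv_eq, fderiv_inner_div_norm_apply_self hy]

theorem fderiv_sub_sq_div_norm_apply_self (hy : y ≠ 0) :
    fderiv ℝ (fun z : E => (‖b‖ ^ 2 - (⟪b, z⟫ / ‖z‖) ^ 2) / ‖z‖) y b
      = -3 * (⟪b, y⟫ / ‖y‖) * (‖b‖ ^ 2 - (⟪b, y⟫ / ‖y‖) ^ 2) / ‖y‖ ^ 2 := by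
  have hy' : ‖y‖ ≠ 0 := norm_ne_zero_iff.2 hy
  have hs := differentiableAt_inner_div_norm (b := b) hy
  rw [fderiv_div_apply (f := fun z => ‖b‖ ^ 2 - (⟪b, z⟫ / ‖z‖) ^ 2) (g := fun z => ‖z‖)
      ((hs.fun_pow 2).const_sub _) (differentiableAt_id.norm ℝ hy) hy',
    fderiv_const_sub, fderiv_fun_pow 2 hs, fderiv_norm_apply_of_ne_zero hy]
  simp only [neg_apply, smul_apply, smul_eq_mul, nsmul_eq_mul, Nat.cast_ofNat, Nat.reduceSub,
    pow_one, fderiv_inner_div_norm_apply_self hy, real_inner_comm y b]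
  field_simp
  ring

theorem fderiv_comp_inner_div_norm_apply_self {Q : ℝ → ℝ}
    (hQ : DifferentiableAt ℝ Q (⟪b, y⟫ / ‖y‖)) (hy : y ≠ 0) :
    fderiv ℝ (fun z : E => Q (⟪b, z⟫ / ‖z‖)) y b
      = deriv Q (⟪b, y⟫ / ‖y‖) * ((‖b‖ ^ 2 - (⟪b, y⟫ / ‖y‖) ^ 2) / ‖y‖) := by
  rw [fderiv_comp_apply_eq_deriv_mul (differentiableAt_inner_div_norm hy) hQ,
    fderiv_inner_div_norm_apply_self hy]

theorem fderiv_fderiv_comp_inner_div_norm_apply_self {Q : ℝ → ℝ} (hQ : Differentiable ℝ Q)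
    (hQ' : DifferentiableAt ℝ (deriv Q) (⟪b, y⟫ / ‖y‖)) (hy : y ≠ 0) :
    fderiv ℝ (fderiv ℝ (fun z : E => Q (⟪b, z⟫ / ‖z‖))) y b b
      = (‖b‖ ^ 2 - (⟪b, y⟫ / ‖y‖) ^ 2) * ((‖b‖ ^ 2 - (⟪b, y⟫ / ‖y‖) ^ 2)
          * deriv (deriv Q) (⟪b, y⟫ / ‖y‖) - 3 * (⟪b, y⟫ / ‖y‖) * deriv Q (⟪b, y⟫ / ‖y‖))
        / ‖y‖ ^ 2 := by
  have hs := differentiableAt_inner_div_norm (b := b) hy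
  have hQ's : DifferentiableAt ℝ (fun z : E => deriv Q (⟪b, z⟫ / ‖z‖)) y :=
    hQ'.comp (g := deriv Q) y hs
  have hgrad : fderiv ℝ (fun z : E => Q (⟪b, z⟫ / ‖z‖))
      =ᶠ[nhds y] fun z => deriv Q (⟪b, z⟫ / ‖z‖) • fderiv ℝ (fun z : E => ⟪b, z⟫ / ‖z‖) z := by
    filter_upwards [isOpen_ne.mem_nhds hy] with z hz
    exact ((hQ _).hasDerivAt.comp_hasFDerivAt z
      (differentiableAt_inner_div_norm hz).hasFDerivAt).fderiv
  have hdiff : DifferentiableAt ℝ (fderiv ℝ (fun z : E => Q (⟪b, z⟫ / ‖z‖))) y :=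
    (hQ's.smul (((contDiffAt_inner_div_norm hy (n := 2)).fderiv_right (m := 1)
      le_rfl).differentiableAt one_ne_zero)).congr_of_eventuallyEq hgrad
  have hgrad_b : (fun z => fderiv ℝ (fun z : E => Q (⟪b, z⟫ / ‖z‖)) z b)
      =ᶠ[nhds y] fun z => deriv Q (⟪b, z⟫ / ‖z‖) * ((‖b‖ ^ 2 - (⟪b, z⟫ / ‖z‖) ^ 2) / ‖z‖) := by
    filter_upwards [isOpen_ne.mem_nhds hy] with z hz
    exact fderiv_comp_inner_div_norm_apply_self (hQ _) hz
  have hw : DifferentiableAt ℝ (fun z : E => (‖b‖ ^ 2 - (⟪b, z⟫ / ‖z‖) ^ 2) / ‖z‖) y :=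
    ((contDiffAt_const.sub ((contDiffAt_inner_div_norm hy (n := 1)).pow 2)).div
      (contDiffAt_norm ℝ hy) (norm_ne_zero_iff.2 hy)).differentiableAt one_ne_zero
  rw [fderiv_fderiv_apply hdiff, hgrad_b.fderiv_eq, fderiv_fun_mul hQ's hw]
  simp only [add_apply, smul_apply, smul_eq_mul, fderiv_comp_apply_eq_deriv_mul hs hQ',
    fderiv_inner_div_norm_apply_self hy, fderiv_sub_sq_div_norm_apply_self hy]
  field_simp
  ring

end InnerProductSpace

/-- with `Λ₁ = bⁱα_{yⁱ}`, `Λ₂ = bⁱbʲα_{yⁱyʲ}`, `Θ₁ = bⁱ(Q∘s)_{yⁱ}`,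
`Θ₂ = bⁱbʲ(Q∘s)_{yⁱyʲ}`, for the Euclidean norm `α(y) = ‖y‖` and `s = ⟪b,y⟫/‖y‖`:
`α·Θ₂ + 2Λ₁Θ₁ + Λ₂·Q(s) = ((‖b‖² - s²)/‖y‖)·[(‖b‖² - s²)Q'' - sQ' + Q]`. -/
theorem stmt_10 {E : Type*} [NormedAddCommGroup E] [InnerProductSpace ℝ E]
    (b : E) (α : E → ℝ) (hα : α = fun y => ‖y‖)
    (s : E → ℝ) (hs : s = fun y => ⟪b, y⟫ / ‖y‖)
    (Q : ℝ → ℝ) (hQ1 : Differentiable ℝ Q) (hQ2 : Differentiable ℝ (deriv Q))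
    (Λ₁ Λ₂ Θ₁ Θ₂ : E → ℝ)
    (hΛ₁ : Λ₁ = fun y => fderiv ℝ α y b)
    (hΛ₂ : Λ₂ = fun y => fderiv ℝ (fderiv ℝ α) y b b)
    (hΘ₁ : Θ₁ = fun y => fderiv ℝ (fun z => Q (s z)) y b)
    (hΘ₂ : Θ₂ = fun y => fderiv ℝ (fderiv ℝ (fun z => Q (s z))) y b b) :
    ∀ y : E, y ≠ 0 →
      α y * Θ₂ y + 2 * Λ₁ y * Θ₁ y + Λ₂ y * Q (s y)
        = ((‖b‖ ^ 2 - (s y) ^ 2) / ‖y‖) *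
            ((‖b‖ ^ 2 - (s y) ^ 2) * deriv (deriv Q) (s y)
              - s y * deriv Q (s y) + Q (s y)) := by
  intro y hy
  subst hα hs hΛ₁ hΛ₂ hΘ₁ hΘ₂
  beta_reduce
  rw [fderiv_norm_apply_of_ne_zero hy, real_inner_comm, fderiv_fderiv_norm_apply_self hy,
    fderiv_comp_inner_div_norm_apply_self (hQ1 _) hy,
    fderiv_fderiv_comp_inner_div_norm_apply_self hQ1 (hQ2 _) hy]
  have hy' : ‖y‖ ≠ 0 := norm_ne_zero_iff.2 hy
  field_simp
  ring
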